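/- arXiv:1606.04253 — 2 statements merged into one kernel-verified Lean document; each statement's English description precedes it below -/
import Mathlib

section
/- Let T ∈ V₁ ⊗ V₂ ⊗ V₃ be a binding tensor over ℂ with dim V₁ = dim V₂ = dim V₃ = n. Then the border rank of T is at most n if and only if T is equivalent to the structure tensor of a smoothable algebra, i.e., if and only if there exists a unital bilinear map φ on ℂⁿ lying in the closure of the GL(ℂⁿ)-orbit {(x, y) ↦ g(μ(g⁻¹x, g⁻¹y)) : g ∈ GL(ℂⁿ)} of the coordinatewise multiplication μ(x, y) = (x₁y₁, …, xₙyₙ) of ℂⁿ, such that the structure tensor of φ in (ℂⁿ)* ⊗ (ℂⁿ)* ⊗ ℂⁿ is equivalent to T. -/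
open scoped BigOperators

/-- A 2-tensor (matrix) is a sum of `r` decomposable tensors. -/
def mrankLE {p m : ℕ} (M : Fin p → Fin m → ℂ) (r : ℕ) : Prop :=
  ∃ v : Fin r → Fin p → ℂ, ∃ w : Fin r → Fin m → ℂ,
    M = fun j k => ∑ s, v s j * w s k

/-- The rank of a 2-tensor. -/
noncomputable def mrank {p m : ℕ} (M : Fin p → Fin m → ℂ) : ℕ :=
  sInf {r | mrankLE M r}

/-- `T'` is a restriction of `T`: `T' = (F₁ ⊗ F₂ ⊗ F₃) T`. -/
def Restriction {n₁ n₂ n₃ m₁ m₂ m₃ : ℕ}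
    (T' : Fin m₁ → Fin m₂ → Fin m₃ → ℂ) (T : Fin n₁ → Fin n₂ → Fin n₃ → ℂ) : Prop :=
  ∃ F₁ : Matrix (Fin m₁) (Fin n₁) ℂ, ∃ F₂ : Matrix (Fin m₂) (Fin n₂) ℂ,
    ∃ F₃ : Matrix (Fin m₃) (Fin n₃) ℂ,
      T' = fun i j k => ∑ a, ∑ b, ∑ c, F₁ i a * F₂ j b * F₃ k c * T a b c

/-- Two tensors are equivalent if each is a restriction of the other. -/
def EquivTensor {n₁ n₂ n₃ m₁ m₂ m₃ : ℕ}
    (T' : Fin m₁ → Fin m₂ → Fin m₃ → ℂ) (T : Fin n₁ → Fin n₂ → Fin n₃ → ℂ) : Prop :=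
  Restriction T' T ∧ Restriction T T'

/-- A tensor of format `n × n × n` is binding if some contraction of its first
factor and some contraction of its second factor both have rank `n`. -/
def Binding {n : ℕ} (T : Fin n → Fin n → Fin n → ℂ) : Prop :=
  (∃ α₁ : Fin n → ℂ, mrank (fun j k => ∑ i, α₁ i * T i j k) = n) ∧
  (∃ α₂ : Fin n → ℂ, mrank (fun i k => ∑ j, α₂ j * T i j k) = n)

/-- `T` is a sum of `r` decomposable tensors (i.e. has rank at most `r`). -/
def rankLE {n₁ n₂ n₃ : ℕ} (T : Fin n₁ → Fin n₂ → Fin n₃ → ℂ) (r : ℕ) : Prop :=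
  ∃ u : Fin r → Fin n₁ → ℂ, ∃ v : Fin r → Fin n₂ → ℂ, ∃ w : Fin r → Fin n₃ → ℂ,
    T = fun i j k => ∑ s, u s i * v s j * w s k

/-- The border rank of a tensor. -/
noncomputable def bRank {n₁ n₂ n₃ : ℕ} (T : Fin n₁ → Fin n₂ → Fin n₃ → ℂ) : ℕ :=
  sInf {r | T ∈ closure {S | rankLE S r}}

/-- The bilinear map induced by a structure-constant array `μ`. -/
noncomputable def mulOf {n : ℕ} (μ : Fin n → Fin n → Fin n → ℂ)
    (x y : Fin n → ℂ) : Fin n → ℂ :=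
  fun k => ∑ i, ∑ j, μ i j k * x i * y j

/-- A bilinear map is unital if it has a two-sided identity element. -/
def IsUnitalBil {n : ℕ} (μ : Fin n → Fin n → Fin n → ℂ) : Prop :=
  ∃ e : Fin n → ℂ, ∀ x : Fin n → ℂ, mulOf μ e x = x ∧ mulOf μ x e = x

/-- Coordinatewise multiplication of `ℂⁿ` as a structure-constant array. -/
noncomputable def diagMul (n : ℕ) : Fin n → Fin n → Fin n → ℂ :=
  fun i j k => if i = j ∧ j = k then 1 else 0

/-- The `GL(ℂⁿ)`-orbit `{(x, y) ↦ g (μ (g⁻¹ x, g⁻¹ y)) : g ∈ GL(ℂⁿ)}`. -/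
def BilOrbit {n : ℕ} (μ : Fin n → Fin n → Fin n → ℂ) :
    Set (Fin n → Fin n → Fin n → ℂ) :=
  {S | ∃ g : GL (Fin n) ℂ,
    S = fun i j k => ∑ a, ∑ b, ∑ c,
      (↑g⁻¹ : Matrix (Fin n) (Fin n) ℂ) a i *
      (↑g⁻¹ : Matrix (Fin n) (Fin n) ℂ) b j *
      (↑g : Matrix (Fin n) (Fin n) ℂ) k c * μ a b c}

/-!
Normalising a binding tensor by the inverses of its two invertible contractions turns it into
the structure tensor of a unital bilinear map, equivalent to it and hence of the same border
rank. For a unital `φ` of border rank `≤ n`, the same normalisation, applied to rank-`n`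
approximants of `φ`, produces unital bilinear maps of rank `n`; these lie in the orbit of the
coordinatewise multiplication, because if `∑ₛ xₛ ⊗ yₛ ⊗ zₛ` has a unit then the `zₛ` form a basis
and the `xₛ` and `yₛ` are rescalings of its dual basis. Conversely, the orbit consists of tensors
of rank `n`, and restriction does not increase border rank.
-/

open Matrix Filter Topology

section Restriction

variable {n₁ n₂ n₃ m₁ m₂ m₃ p₁ p₂ p₃ : ℕ}

def restrictFst (F : Matrix (Fin m₁) (Fin n₁) ℂ) (T : Fin n₁ → Fin n₂ → Fin n₃ → ℂ) :
    Fin m₁ → Fin n₂ → Fin n₃ → ℂ :=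
  fun i j k => ∑ a, F i a * T a j k

def restrictSnd (F : Matrix (Fin m₂) (Fin n₂) ℂ) (T : Fin n₁ → Fin n₂ → Fin n₃ → ℂ) :
    Fin n₁ → Fin m₂ → Fin n₃ → ℂ :=
  fun i j k => ∑ b, F j b * T i b k

def restrictThd (F : Matrix (Fin m₃) (Fin n₃) ℂ) (T : Fin n₁ → Fin n₂ → Fin n₃ → ℂ) :
    Fin n₁ → Fin n₂ → Fin m₃ → ℂ :=
  fun i j k => ∑ c, F k c * T i j c

def restrictTensor (F₁ : Matrix (Fin m₁) (Fin n₁) ℂ) (F₂ : Matrix (Fin m₂) (Fin n₂) ℂ)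
    (F₃ : Matrix (Fin m₃) (Fin n₃) ℂ) (T : Fin n₁ → Fin n₂ → Fin n₃ → ℂ) :
    Fin m₁ → Fin m₂ → Fin m₃ → ℂ :=
  fun i j k => ∑ a, ∑ b, ∑ c, F₁ i a * F₂ j b * F₃ k c * T a b c

theorem restrictTensor_eq_restrictFst_restrictSnd_restrictThd (F₁ : Matrix (Fin m₁) (Fin n₁) ℂ)
    (F₂ : Matrix (Fin m₂) (Fin n₂) ℂ) (F₃ : Matrix (Fin m₃) (Fin n₃) ℂ)
    (T : Fin n₁ → Fin n₂ → Fin n₃ → ℂ) :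
    restrictTensor F₁ F₂ F₃ T = restrictFst F₁ (restrictSnd F₂ (restrictThd F₃ T)) := by
  funext i j k
  simp only [restrictTensor, restrictFst, restrictSnd, restrictThd, Finset.mul_sum]
  exact Finset.sum_congr rfl fun a _ => Finset.sum_congr rfl fun b _ =>
    Finset.sum_congr rfl fun c _ => by ring

theorem restrictFst_one (T : Fin n₁ → Fin n₂ → Fin n₃ → ℂ) : restrictFst 1 T = T := by
  funext i j k; simp [restrictFst, one_apply]

theorem restrictSnd_one (T : Fin n₁ → Fin n₂ → Fin n₃ → ℂ) : restrictSnd 1 T = T := by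
  funext i j k; simp [restrictSnd, one_apply]

theorem restrictThd_one (T : Fin n₁ → Fin n₂ → Fin n₃ → ℂ) : restrictThd 1 T = T := by
  funext i j k; simp [restrictThd, one_apply]

theorem restrictFst_restrictFst (F : Matrix (Fin p₁) (Fin m₁) ℂ) (G : Matrix (Fin m₁) (Fin n₁) ℂ)
    (T : Fin n₁ → Fin n₂ → Fin n₃ → ℂ) :
    restrictFst F (restrictFst G T) = restrictFst (F * G) T := by
  funext i j k
  simp only [restrictFst, mul_apply, Finset.mul_sum, Finset.sum_mul]
  rw [Finset.sum_comm]
  exact Finset.sum_congr rfl fun a _ => Finset.sum_congr rfl fun b _ => by ring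

theorem restrictSnd_restrictSnd (F : Matrix (Fin p₂) (Fin m₂) ℂ) (G : Matrix (Fin m₂) (Fin n₂) ℂ)
    (T : Fin n₁ → Fin n₂ → Fin n₃ → ℂ) :
    restrictSnd F (restrictSnd G T) = restrictSnd (F * G) T := by
  funext i j k
  simp only [restrictSnd, mul_apply, Finset.mul_sum, Finset.sum_mul]
  rw [Finset.sum_comm]
  exact Finset.sum_congr rfl fun a _ => Finset.sum_congr rfl fun b _ => by ring

theorem restrictThd_restrictThd (F : Matrix (Fin p₃) (Fin m₃) ℂ) (G : Matrix (Fin m₃) (Fin n₃) ℂ)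
    (T : Fin n₁ → Fin n₂ → Fin n₃ → ℂ) :
    restrictThd F (restrictThd G T) = restrictThd (F * G) T := by
  funext i j k
  simp only [restrictThd, mul_apply, Finset.mul_sum, Finset.sum_mul]
  rw [Finset.sum_comm]
  exact Finset.sum_congr rfl fun a _ => Finset.sum_congr rfl fun b _ => by ring

theorem restrictFst_restrictSnd_comm (F : Matrix (Fin m₁) (Fin n₁) ℂ)
    (G : Matrix (Fin m₂) (Fin n₂) ℂ) (T : Fin n₁ → Fin n₂ → Fin n₃ → ℂ) :
    restrictFst F (restrictSnd G T) = restrictSnd G (restrictFst F T) := by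
  funext i j k
  simp only [restrictFst, restrictSnd, Finset.mul_sum]
  rw [Finset.sum_comm]
  exact Finset.sum_congr rfl fun a _ => Finset.sum_congr rfl fun b _ => by ring

theorem restrictFst_restrictThd_comm (F : Matrix (Fin m₁) (Fin n₁) ℂ)
    (G : Matrix (Fin m₃) (Fin n₃) ℂ) (T : Fin n₁ → Fin n₂ → Fin n₃ → ℂ) :
    restrictFst F (restrictThd G T) = restrictThd G (restrictFst F T) := by
  funext i j k
  simp only [restrictFst, restrictThd, Finset.mul_sum]
  rw [Finset.sum_comm]
  exact Finset.sum_congr rfl fun a _ => Finset.sum_congr rfl fun b _ => by ring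

theorem restrictSnd_restrictThd_comm (F : Matrix (Fin m₂) (Fin n₂) ℂ)
    (G : Matrix (Fin m₃) (Fin n₃) ℂ) (T : Fin n₁ → Fin n₂ → Fin n₃ → ℂ) :
    restrictSnd F (restrictThd G T) = restrictThd G (restrictSnd F T) := by
  funext i j k
  simp only [restrictSnd, restrictThd, Finset.mul_sum]
  rw [Finset.sum_comm]
  exact Finset.sum_congr rfl fun a _ => Finset.sum_congr rfl fun b _ => by ring

theorem restrictTensor_one (T : Fin n₁ → Fin n₂ → Fin n₃ → ℂ) : restrictTensor 1 1 1 T = T := by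
  rw [restrictTensor_eq_restrictFst_restrictSnd_restrictThd, restrictThd_one, restrictSnd_one,
    restrictFst_one]

theorem restrictTensor_restrictTensor (F₁ : Matrix (Fin p₁) (Fin m₁) ℂ)
    (F₂ : Matrix (Fin p₂) (Fin m₂) ℂ) (F₃ : Matrix (Fin p₃) (Fin m₃) ℂ)
    (G₁ : Matrix (Fin m₁) (Fin n₁) ℂ) (G₂ : Matrix (Fin m₂) (Fin n₂) ℂ)
    (G₃ : Matrix (Fin m₃) (Fin n₃) ℂ) (T : Fin n₁ → Fin n₂ → Fin n₃ → ℂ) :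
    restrictTensor F₁ F₂ F₃ (restrictTensor G₁ G₂ G₃ T) =
      restrictTensor (F₁ * G₁) (F₂ * G₂) (F₃ * G₃) T := by
  simp only [restrictTensor_eq_restrictFst_restrictSnd_restrictThd]
  rw [← restrictFst_restrictThd_comm, ← restrictSnd_restrictThd_comm, restrictThd_restrictThd,
    ← restrictFst_restrictSnd_comm, restrictFst_restrictFst, restrictSnd_restrictSnd]

theorem continuous_restrictTensor :
    Continuous fun p : Matrix (Fin m₁) (Fin n₁) ℂ × Matrix (Fin m₂) (Fin n₂) ℂ ×
        Matrix (Fin m₃) (Fin n₃) ℂ × (Fin n₁ → Fin n₂ → Fin n₃ → ℂ) =>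
      restrictTensor p.1 p.2.1 p.2.2.1 p.2.2.2 := by
  unfold restrictTensor
  fun_prop

theorem equivTensor_restrictTensor {F₁ : Matrix (Fin n₁) (Fin n₁) ℂ}
    {F₂ : Matrix (Fin n₂) (Fin n₂) ℂ} {F₃ : Matrix (Fin n₃) (Fin n₃) ℂ}
    (h₁ : IsUnit F₁.det) (h₂ : IsUnit F₂.det) (h₃ : IsUnit F₃.det)
    (T : Fin n₁ → Fin n₂ → Fin n₃ → ℂ) :
    EquivTensor (restrictTensor F₁ F₂ F₃ T) T := by
  refine ⟨⟨F₁, F₂, F₃, rfl⟩, F₁⁻¹, F₂⁻¹, F₃⁻¹, ?_⟩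
  change T = restrictTensor F₁⁻¹ F₂⁻¹ F₃⁻¹ (restrictTensor F₁ F₂ F₃ T)
  rw [restrictTensor_restrictTensor, nonsing_inv_mul _ h₁, nonsing_inv_mul _ h₂,
    nonsing_inv_mul _ h₃, restrictTensor_one]

end Restriction

section Rank

variable {n₁ n₂ n₃ m₁ m₂ m₃ r r' : ℕ}

theorem restrictTensor_diagMul (X : Matrix (Fin n₁) (Fin r) ℂ) (Y : Matrix (Fin n₂) (Fin r) ℂ)
    (Z : Matrix (Fin n₃) (Fin r) ℂ) :
    restrictTensor X Y Z (diagMul r) = fun i j k => ∑ s, X i s * Y j s * Z k s := by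
  funext i j k
  simp [restrictTensor, diagMul, ite_and, mul_ite]

theorem rankLE_iff_exists_eq_restrictTensor_diagMul {T : Fin n₁ → Fin n₂ → Fin n₃ → ℂ} :
    rankLE T r ↔ ∃ X Y Z, T = restrictTensor X Y Z (diagMul r) := by
  simp only [restrictTensor_diagMul]
  constructor
  · rintro ⟨u, v, w, rfl⟩
    exact ⟨(of u)ᵀ, (of v)ᵀ, (of w)ᵀ, rfl⟩
  · rintro ⟨X, Y, Z, rfl⟩
    exact ⟨Xᵀ, Yᵀ, Zᵀ, rfl⟩

theorem rankLE.restrictTensor {T : Fin n₁ → Fin n₂ → Fin n₃ → ℂ} (h : rankLE T r)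
    (F₁ : Matrix (Fin m₁) (Fin n₁) ℂ) (F₂ : Matrix (Fin m₂) (Fin n₂) ℂ)
    (F₃ : Matrix (Fin m₃) (Fin n₃) ℂ) : rankLE (restrictTensor F₁ F₂ F₃ T) r := by
  obtain ⟨X, Y, Z, rfl⟩ := rankLE_iff_exists_eq_restrictTensor_diagMul.1 h
  rw [restrictTensor_restrictTensor]
  exact rankLE_iff_exists_eq_restrictTensor_diagMul.2 ⟨_, _, _, rfl⟩

theorem rankLE.mono {T : Fin n₁ → Fin n₂ → Fin n₃ → ℂ} (h : rankLE T r) (hr : r ≤ r') :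
    rankLE T r' := by
  obtain ⟨d, rfl⟩ := Nat.exists_eq_add_of_le hr
  obtain ⟨u, v, w, rfl⟩ := h
  refine ⟨Fin.append u 0, Fin.append v 0, Fin.append w 0, ?_⟩
  funext i j k
  simp [Fin.sum_univ_add]

theorem rankLE_mul_dims (T : Fin n₁ → Fin n₂ → Fin n₃ → ℂ) : rankLE T (n₁ * n₂) := by
  let e := (finProdFinEquiv (m := n₁) (n := n₂)).symm
  refine ⟨fun s => Pi.single (e s).1 1, fun s => Pi.single (e s).2 1,
    fun s => T (e s).1 (e s).2, ?_⟩
  funext i j k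
  rw [← e.symm.sum_comp]
  simp [Fintype.sum_prod_type, Pi.single_apply]

theorem bRank_le_iff {T : Fin n₁ → Fin n₂ → Fin n₃ → ℂ} :
    bRank T ≤ r ↔ T ∈ closure {S | rankLE S r} := by
  refine ⟨fun h => ?_, fun h => Nat.sInf_le h⟩
  have hmem : T ∈ closure {S | rankLE S (bRank T)} :=
    Nat.sInf_mem (s := {r | T ∈ closure {S | rankLE S r}}) ⟨_, subset_closure (rankLE_mul_dims T)⟩
  exact closure_mono (fun _ hS => rankLE.mono hS h) hmem

theorem Restriction.bRank_le {T' : Fin m₁ → Fin m₂ → Fin m₃ → ℂ}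
    {T : Fin n₁ → Fin n₂ → Fin n₃ → ℂ} (h : Restriction T' T) : bRank T' ≤ bRank T := by
  obtain ⟨F₁, F₂, F₃, hT' : T' = restrictTensor F₁ F₂ F₃ T⟩ := h
  have hcont : Continuous (restrictTensor F₁ F₂ F₃ : (Fin n₁ → Fin n₂ → Fin n₃ → ℂ) → _) := by
    unfold restrictTensor; fun_prop
  rw [hT', bRank_le_iff]
  exact map_mem_closure hcont (bRank_le_iff.1 le_rfl) fun S hS => hS.restrictTensor F₁ F₂ F₃

end Rank

section MatrixRank

variable {p q n : ℕ}

theorem mrankLE_of_vecMul_eq_zero {M : Matrix (Fin (p + 1)) (Fin q) ℂ} {u : Fin (p + 1) → ℂ}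
    (hu : u ≠ 0) (huM : u ᵥ* M = 0) : mrankLE M p := by
  obtain ⟨j₀, hj₀⟩ : ∃ j, u j ≠ 0 := Function.ne_iff.mp hu
  -- `P * M = M`, and the column `j₀` of `P` vanishes, so `M` only needs the other rows
  set P : Matrix (Fin (p + 1)) (Fin (p + 1)) ℂ := 1 - vecMulVec (Pi.single j₀ (u j₀)⁻¹) u
    with hPdef
  have hPM : P * M = M := by
    rw [hPdef, Matrix.sub_mul, vecMulVec_mul, huM, Matrix.one_mul]
    ext
    simp [vecMulVec_apply]
  have hP : ∀ j, P j j₀ = 0 := fun j => by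
    simp [hPdef, vecMulVec_apply, one_apply, Pi.single_apply, inv_mul_cancel₀ hj₀]
  refine ⟨fun s j => P j (j₀.succAbove s), fun s k => M (j₀.succAbove s) k, ?_⟩
  funext j k
  calc M j k = (P * M) j k := by rw [hPM]
    _ = _ := by rw [mul_apply, Fin.sum_univ_succAbove _ j₀, hP, zero_mul, zero_add]

theorem isUnit_det_of_mrank_eq {M : Matrix (Fin n) (Fin n) ℂ} (h : mrank M = n) :
    IsUnit M.det := by
  rw [isUnit_iff_ne_zero]
  intro hdet
  obtain ⟨u, hu, huM⟩ := exists_vecMul_eq_zero_iff.2 hdet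
  cases n with
  | zero => exact hu (Subsingleton.elim _ _)
  | succ p =>
    have : mrank M ≤ p := Nat.sInf_le (mrankLE_of_vecMul_eq_zero hu huM)
    omega

end MatrixRank

section Contraction

variable {n₁ n₂ n₃ m₁ m₂ m₃ r : ℕ}

def contractFst (α : Fin n₁ → ℂ) (T : Fin n₁ → Fin n₂ → Fin n₃ → ℂ) :
    Matrix (Fin n₂) (Fin n₃) ℂ :=
  of fun j k => ∑ i, α i * T i j k

def contractSnd (α : Fin n₂ → ℂ) (T : Fin n₁ → Fin n₂ → Fin n₃ → ℂ) :
    Matrix (Fin n₁) (Fin n₃) ℂ :=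
  of fun i k => ∑ j, α j * T i j k

theorem continuous_contractFst (α : Fin n₁ → ℂ) :
    Continuous (contractFst α : (Fin n₁ → Fin n₂ → Fin n₃ → ℂ) → _) := by
  unfold contractFst; fun_prop

theorem continuous_contractSnd (α : Fin n₂ → ℂ) :
    Continuous (contractSnd α : (Fin n₁ → Fin n₂ → Fin n₃ → ℂ) → _) := by
  unfold contractSnd; fun_prop

theorem vecMul_contractSnd (α₁ : Fin n₁ → ℂ) (α₂ : Fin n₂ → ℂ)
    (T : Fin n₁ → Fin n₂ → Fin n₃ → ℂ) :
    α₁ ᵥ* contractSnd α₂ T = α₂ ᵥ* contractFst α₁ T := by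
  funext k
  simp only [vecMul, dotProduct, contractFst, contractSnd, of_apply, Finset.mul_sum]
  rw [Finset.sum_comm]
  exact Finset.sum_congr rfl fun _ _ => Finset.sum_congr rfl fun _ _ => by ring

theorem contractFst_restrictFst (α : Fin m₁ → ℂ) (F : Matrix (Fin m₁) (Fin n₁) ℂ)
    (T : Fin n₁ → Fin n₂ → Fin n₃ → ℂ) :
    contractFst α (restrictFst F T) = contractFst (α ᵥ* F) T := by
  ext j k
  simp only [contractFst, restrictFst, vecMul, dotProduct, of_apply, Finset.mul_sum,
    Finset.sum_mul]
  rw [Finset.sum_comm]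
  exact Finset.sum_congr rfl fun _ _ => Finset.sum_congr rfl fun _ _ => by ring

theorem contractFst_restrictSnd (α : Fin n₁ → ℂ) (F : Matrix (Fin m₂) (Fin n₂) ℂ)
    (T : Fin n₁ → Fin n₂ → Fin n₃ → ℂ) :
    contractFst α (restrictSnd F T) = F * contractFst α T := by
  ext j k
  simp only [contractFst, restrictSnd, mul_apply, of_apply, Finset.mul_sum]
  rw [Finset.sum_comm]
  exact Finset.sum_congr rfl fun _ _ => Finset.sum_congr rfl fun _ _ => by ring

theorem contractFst_restrictThd (α : Fin n₁ → ℂ) (F : Matrix (Fin m₃) (Fin n₃) ℂ)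
    (T : Fin n₁ → Fin n₂ → Fin n₃ → ℂ) :
    contractFst α (restrictThd F T) = contractFst α T * Fᵀ := by
  ext j k
  simp only [contractFst, restrictThd, mul_apply, transpose_apply, of_apply, Finset.mul_sum,
    Finset.sum_mul]
  rw [Finset.sum_comm]
  exact Finset.sum_congr rfl fun _ _ => Finset.sum_congr rfl fun _ _ => by ring

theorem contractSnd_restrictFst (α : Fin n₂ → ℂ) (F : Matrix (Fin m₁) (Fin n₁) ℂ)
    (T : Fin n₁ → Fin n₂ → Fin n₃ → ℂ) :
    contractSnd α (restrictFst F T) = F * contractSnd α T := by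
  ext j k
  simp only [contractSnd, restrictFst, mul_apply, of_apply, Finset.mul_sum]
  rw [Finset.sum_comm]
  exact Finset.sum_congr rfl fun _ _ => Finset.sum_congr rfl fun _ _ => by ring

theorem contractSnd_restrictSnd (α : Fin m₂ → ℂ) (F : Matrix (Fin m₂) (Fin n₂) ℂ)
    (T : Fin n₁ → Fin n₂ → Fin n₃ → ℂ) :
    contractSnd α (restrictSnd F T) = contractSnd (α ᵥ* F) T := by
  ext j k
  simp only [contractSnd, restrictSnd, vecMul, dotProduct, of_apply, Finset.mul_sum,
    Finset.sum_mul]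
  rw [Finset.sum_comm]
  exact Finset.sum_congr rfl fun _ _ => Finset.sum_congr rfl fun _ _ => by ring

theorem contractSnd_restrictThd (α : Fin n₂ → ℂ) (F : Matrix (Fin m₃) (Fin n₃) ℂ)
    (T : Fin n₁ → Fin n₂ → Fin n₃ → ℂ) :
    contractSnd α (restrictThd F T) = contractSnd α T * Fᵀ := by
  ext j k
  simp only [contractSnd, restrictThd, mul_apply, transpose_apply, of_apply, Finset.mul_sum,
    Finset.sum_mul]
  rw [Finset.sum_comm]
  exact Finset.sum_congr rfl fun _ _ => Finset.sum_congr rfl fun _ _ => by ring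

theorem contractFst_restrictTensor (α : Fin m₁ → ℂ) (F₁ : Matrix (Fin m₁) (Fin n₁) ℂ)
    (F₂ : Matrix (Fin m₂) (Fin n₂) ℂ) (F₃ : Matrix (Fin m₃) (Fin n₃) ℂ)
    (T : Fin n₁ → Fin n₂ → Fin n₃ → ℂ) :
    contractFst α (restrictTensor F₁ F₂ F₃ T) = F₂ * contractFst (α ᵥ* F₁) T * F₃ᵀ := by
  rw [restrictTensor_eq_restrictFst_restrictSnd_restrictThd, contractFst_restrictFst,
    contractFst_restrictSnd, contractFst_restrictThd, Matrix.mul_assoc]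

theorem contractSnd_restrictTensor (α : Fin m₂ → ℂ) (F₁ : Matrix (Fin m₁) (Fin n₁) ℂ)
    (F₂ : Matrix (Fin m₂) (Fin n₂) ℂ) (F₃ : Matrix (Fin m₃) (Fin n₃) ℂ)
    (T : Fin n₁ → Fin n₂ → Fin n₃ → ℂ) :
    contractSnd α (restrictTensor F₁ F₂ F₃ T) = F₁ * contractSnd (α ᵥ* F₂) T * F₃ᵀ := by
  rw [restrictTensor_eq_restrictFst_restrictSnd_restrictThd, contractSnd_restrictFst,
    contractSnd_restrictSnd, contractSnd_restrictThd, Matrix.mul_assoc]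

theorem contractFst_diagMul (α : Fin r → ℂ) : contractFst α (diagMul r) = diagonal α := by
  ext j k
  simp [contractFst, diagMul, diagonal, ite_and, eq_comm]

theorem contractSnd_diagMul (α : Fin r → ℂ) : contractSnd α (diagMul r) = diagonal α := by
  ext j k
  simp [contractSnd, diagMul, diagonal, ite_and, eq_comm]

end Contraction

section Unital

variable {n : ℕ}

theorem isUnitalBil_iff {μ : Fin n → Fin n → Fin n → ℂ} :
    IsUnitalBil μ ↔ ∃ e, contractFst e μ = 1 ∧ contractSnd e μ = 1 := by
  have hFst : ∀ e y, mulOf μ e y = y ᵥ* contractFst e μ := fun e y => by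
    funext k
    simp only [mulOf, vecMul, dotProduct, contractFst, of_apply, Finset.mul_sum]
    rw [Finset.sum_comm]
    exact Finset.sum_congr rfl fun _ _ => Finset.sum_congr rfl fun _ _ => by ring
  have hSnd : ∀ x e, mulOf μ x e = x ᵥ* contractSnd e μ := fun x e => by
    funext k
    simp only [mulOf, vecMul, dotProduct, contractSnd, of_apply, Finset.mul_sum]
    exact Finset.sum_congr rfl fun _ _ => Finset.sum_congr rfl fun _ _ => by ring
  refine exists_congr fun e => ?_
  simp only [ext_iff_vecMul, vecMul_one, ← hFst e, ← hSnd _ e, forall_and]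

noncomputable def unitalize (α₁ α₂ : Fin n → ℂ) (T : Fin n → Fin n → Fin n → ℂ) :
    Fin n → Fin n → Fin n → ℂ :=
  restrictTensor (contractSnd α₂ T)⁻¹ (contractFst α₁ T)⁻¹ 1 T

variable {α₁ α₂ : Fin n → ℂ} {T : Fin n → Fin n → Fin n → ℂ}

theorem isUnitalBil_unitalize (h₁ : IsUnit (contractFst α₁ T).det)
    (h₂ : IsUnit (contractSnd α₂ T).det) : IsUnitalBil (unitalize α₁ α₂ T) := by
  -- the unit is the product `mulOf T α₁ α₂`
  refine isUnitalBil_iff.2 ⟨α₁ ᵥ* contractSnd α₂ T, ?_, ?_⟩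
  · rw [unitalize, contractFst_restrictTensor, vecMul_vecMul, mul_nonsing_inv _ h₂, vecMul_one,
      transpose_one, Matrix.mul_one, nonsing_inv_mul _ h₁]
  · rw [unitalize, contractSnd_restrictTensor, vecMul_contractSnd, vecMul_vecMul,
      mul_nonsing_inv _ h₁, vecMul_one, transpose_one, Matrix.mul_one, nonsing_inv_mul _ h₂]

theorem equivTensor_unitalize (h₁ : IsUnit (contractFst α₁ T).det)
    (h₂ : IsUnit (contractSnd α₂ T).det) : EquivTensor (unitalize α₁ α₂ T) T :=
  equivTensor_restrictTensor (isUnit_nonsing_inv_det _ h₂) (isUnit_nonsing_inv_det _ h₁)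
    (by simp) T

theorem unitalize_eq_self {e : Fin n → ℂ} (h₁ : contractFst e T = 1) (h₂ : contractSnd e T = 1) :
    unitalize e e T = T := by
  rw [unitalize, h₁, h₂, inv_one, restrictTensor_one]

theorem continuousAt_unitalize (h₁ : IsUnit (contractFst α₁ T).det)
    (h₂ : IsUnit (contractSnd α₂ T).det) : ContinuousAt (unitalize α₁ α₂) T := by
  have hinv : ∀ A : Matrix (Fin n) (Fin n) ℂ, IsUnit A.det → ContinuousAt Inv.inv A :=
    fun A hA => continuousAt_matrix_inv A (NormedRing.inverse_continuousAt hA.unit)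
  have hfactors : ContinuousAt (fun S => ((contractSnd α₂ S)⁻¹, (contractFst α₁ S)⁻¹,
      (1 : Matrix (Fin n) (Fin n) ℂ), S)) T :=
    ((hinv _ h₂).comp (continuous_contractSnd α₂).continuousAt).prodMk
      (((hinv _ h₁).comp (continuous_contractFst α₁).continuousAt).prodMk
        (continuousAt_const.prodMk continuousAt_id))
  have hcomp := (continuous_restrictTensor (m₁ := n) (m₂ := n) (m₃ := n) (n₁ := n) (n₂ := n)
    (n₃ := n)).continuousAt.comp hfactors
  exact hcomp

end Unital

section Orbit

variable {n : ℕ}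

theorem mem_bilOrbit_iff {μ S : Fin n → Fin n → Fin n → ℂ} :
    S ∈ BilOrbit μ ↔ ∃ g : GL (Fin n) ℂ,
      S = restrictTensor (↑g⁻¹ : Matrix (Fin n) (Fin n) ℂ)ᵀ (↑g⁻¹ : Matrix (Fin n) (Fin n) ℂ)ᵀ
        ↑g μ :=
  Iff.rfl

theorem rankLE_of_mem_bilOrbit_diagMul {S : Fin n → Fin n → Fin n → ℂ}
    (hS : S ∈ BilOrbit (diagMul n)) : rankLE S n := by
  obtain ⟨g, rfl⟩ := mem_bilOrbit_iff.1 hS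
  exact rankLE_iff_exists_eq_restrictTensor_diagMul.2 ⟨_, _, _, rfl⟩

theorem restrictTensor_diagMul_mem_bilOrbit {X Y Z : Matrix (Fin n) (Fin n) ℂ} {a b : Fin n → ℂ}
    (hY : Y * diagonal a * Zᵀ = 1) (hX : X * diagonal b * Zᵀ = 1) :
    restrictTensor X Y Z (diagMul n) ∈ BilOrbit (diagMul n) := by
  have hZY : Zᵀ * (Y * diagonal a) = 1 := mul_eq_one_comm.1 hY
  have hZX : Zᵀ * (X * diagonal b) = 1 := mul_eq_one_comm.1 hX
  have hXY : X * diagonal b = Y * diagonal a := left_inv_eq_right_inv hX hZY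
  have hb : ∀ s, b s ≠ 0 := fun s => by
    have := congrFun₂ hZX s s
    rw [← Matrix.mul_assoc, mul_diagonal, one_apply_eq] at this
    exact right_ne_zero_of_mul_eq_one this
  -- rescale the `s`-th summand `xₛ ⊗ yₛ ⊗ zₛ` to `(yₛ / bₛ) ⊗ (yₛ / bₛ) ⊗ (aₛ bₛ zₛ)`
  have hg : Z * diagonal (a * b) * (diagonal b⁻¹ * Yᵀ) = 1 := by
    rw [Matrix.mul_assoc, ← Matrix.mul_assoc (diagonal _), diagonal_mul_diagonal,
      show (fun s => (a * b) s * b⁻¹ s) = a from funext fun s => by simp [hb s]]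
    simpa [Matrix.mul_assoc, transpose_mul] using congrArg transpose hY
  let g : GL (Fin n) ℂ := ⟨_, _, hg, mul_eq_one_comm.1 hg⟩
  refine mem_bilOrbit_iff.2 ⟨g, ?_⟩
  simp only [g, Units.inv_mk, Units.val_mk, transpose_mul, diagonal_transpose, transpose_transpose,
    restrictTensor_diagMul]
  funext i j k
  refine Finset.sum_congr rfl fun s _ => ?_
  have hXs : X i s = Y i s * a s / b s := by
    rw [eq_div_iff (hb s)]
    simpa [mul_diagonal] using congrFun₂ hXY i s
  simp only [mul_diagonal, hXs, Pi.mul_apply, Pi.inv_apply]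
  field_simp [hb s]

theorem mem_bilOrbit_diagMul_of_isUnitalBil {ψ : Fin n → Fin n → Fin n → ℂ}
    (hU : IsUnitalBil ψ) (hr : rankLE ψ n) : ψ ∈ BilOrbit (diagMul n) := by
  obtain ⟨e, h₁, h₂⟩ := isUnitalBil_iff.1 hU
  obtain ⟨X, Y, Z, rfl⟩ := rankLE_iff_exists_eq_restrictTensor_diagMul.1 hr
  rw [contractFst_restrictTensor, contractFst_diagMul] at h₁
  rw [contractSnd_restrictTensor, contractSnd_diagMul] at h₂
  exact restrictTensor_diagMul_mem_bilOrbit h₁ h₂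

theorem mem_closure_bilOrbit_diagMul_iff {φ : Fin n → Fin n → Fin n → ℂ} (hU : IsUnitalBil φ) :
    φ ∈ closure (BilOrbit (diagMul n)) ↔ bRank φ ≤ n := by
  refine ⟨fun h => bRank_le_iff.2 (closure_mono (fun _ => rankLE_of_mem_bilOrbit_diagMul) h),
    fun h => ?_⟩
  obtain ⟨e, h₁, h₂⟩ := isUnitalBil_iff.1 hU
  have h₁' : IsUnit (contractFst e φ).det := by simp [h₁]
  have h₂' : IsUnit (contractSnd e φ).det := by simp [h₂]
  -- `unitalize e e` fixes `φ`, and near `φ` it maps tensors of rank `≤ n` into the orbit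
  have hnear : ∀ᶠ S in 𝓝 φ, IsUnit (contractFst e S).det ∧ IsUnit (contractSnd e S).det := by
    simp only [isUnit_iff_ne_zero]
    exact (((continuous_contractFst e).matrix_det.continuousAt).eventually_ne h₁'.ne_zero).and
      (((continuous_contractSnd e).matrix_det.continuousAt).eventually_ne h₂'.ne_zero)
  have hlim : Tendsto (unitalize e e) (𝓝[{S | rankLE S n}] φ) (𝓝 φ) := by
    simpa [unitalize_eq_self h₁ h₂] using
      (continuousAt_unitalize h₁' h₂').tendsto.mono_left nhdsWithin_le_nhds
  have hmem : ∀ᶠ S in 𝓝[{S | rankLE S n}] φ, unitalize e e S ∈ BilOrbit (diagMul n) := by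
    refine eventually_nhdsWithin_iff.2 (hnear.mono fun S hS hr => ?_)
    exact mem_bilOrbit_diagMul_of_isUnitalBil (isUnitalBil_unitalize hS.1 hS.2)
      (rankLE.restrictTensor hr _ _ _)
  have : (𝓝[{S | rankLE S n}] φ).NeBot := mem_closure_iff_nhdsWithin_neBot.1 (bRank_le_iff.1 h)
  exact mem_closure_of_tendsto hlim hmem

end Orbit

/-- a binding tensor has border rank at most `n` iff it is
equivalent to the structure tensor of a smoothable algebra, i.e. of a unital
bilinear map lying in the closure of the `GL(ℂⁿ)`-orbit of the coordinatewise
multiplication of `ℂⁿ`. -/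
theorem stmt5 {n : ℕ} (T : Fin n → Fin n → Fin n → ℂ) (hT : Binding T) :
    bRank T ≤ n ↔
      ∃ φ : Fin n → Fin n → Fin n → ℂ, IsUnitalBil φ ∧
        φ ∈ closure (BilOrbit (diagMul n)) ∧ EquivTensor φ T := by
  constructor
  · intro hT_le
    obtain ⟨⟨α₁, h₁⟩, ⟨α₂, h₂⟩⟩ := hT
    have h₁' : IsUnit (contractFst α₁ T).det := isUnit_det_of_mrank_eq h₁
    have h₂' : IsUnit (contractSnd α₂ T).det := isUnit_det_of_mrank_eq h₂
    have hU := isUnitalBil_unitalize h₁' h₂'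
    have hequiv := equivTensor_unitalize h₁' h₂'
    exact ⟨_, hU, (mem_closure_bilOrbit_diagMul_iff hU).2 (hequiv.1.bRank_le.trans hT_le), hequiv⟩
  · rintro ⟨φ, hU, hφ, hequiv⟩
    exact hequiv.2.bRank_le.trans ((mem_closure_bilOrbit_diagMul_iff hU).1 hφ)
end

section
/- Fix q ≥ 2 and let φ_cw : ℂ^{q+1} × ℂ^{q+1} → ℂ^{q+1} be the easy Coppersmith–Winograd bilinear map. Then for every n ≥ 1, m(φ_cw^{⊗n}) = 2ⁿ, where φ_cw^{⊗n} denotes the n-fold tensor product of φ_cw with itself. -/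
open scoped BigOperators

/-- Evaluation of a bilinear map given by a structure-constant array. -/
noncomputable def bApp {I J K : Type*} [Fintype I] [Fintype J]
    (ψ : I → J → K → ℂ) (u : I → ℂ) (v : J → ℂ) : K → ℂ :=
  fun k => ∑ i, ∑ j, ψ i j k * u i * v j

/-- `m(ψ)`: the minimum over nonzero `u` of the dimension of the span of
`{ψ(u, v) : v}`. -/
noncomputable def mval {I J K : Type*} [Fintype I] [Fintype J]
    (ψ : I → J → K → ℂ) : ℕ :=
  sInf {d | ∃ u : I → ℂ, u ≠ 0 ∧
    d = Module.finrank ℂ (Submodule.span ℂ (Set.range (bApp ψ u)))}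

/-- The easy Coppersmith–Winograd bilinear map
`φ_cw(a, b) = (Σᵢ aᵢbᵢ) e₀ + Σᵢ (a₀bᵢ + aᵢb₀) eᵢ` on `ℂ^{q+1}`,
as a structure-constant array. -/
noncomputable def cwArr (q : ℕ) : Fin (q + 1) → Fin (q + 1) → Fin (q + 1) → ℂ :=
  fun i j k =>
    if k = 0 then (if i = j ∧ i ≠ 0 then 1 else 0)
    else (if i = 0 ∧ j = k then 1 else 0) + (if i = k ∧ j = 0 then 1 else 0)

/-- The `n`-fold tensor power `φ_cw^{⊗n}`, in coordinates: the index set of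
each factor of the `n`-fold tensor power of `ℂ^{q+1}` is `Fin n → Fin (q+1)`. -/
noncomputable def cwPow (q n : ℕ) :
    (Fin n → Fin (q + 1)) → (Fin n → Fin (q + 1)) → (Fin n → Fin (q + 1)) → ℂ :=
  fun i j k => ∏ t, cwArr q (i t) (j t) (k t)

/-! ### Auxiliary machinery -/

/-- The slice linear map `v ↦ ψ(u, v)`. -/
noncomputable def sliceL {I J K : Type*} [Fintype I] [Fintype J]
    (ψ : I → J → K → ℂ) (u : I → ℂ) : (J → ℂ) →ₗ[ℂ] (K → ℂ) where
  toFun := bApp ψ u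
  map_add' v w := by
    funext k
    simp [bApp, mul_add, Finset.sum_add_distrib]
  map_smul' c v := by
    funext k
    simp only [bApp, Pi.smul_apply, smul_eq_mul, RingHom.id_apply, Finset.mul_sum]
    exact Finset.sum_congr rfl fun i _ => Finset.sum_congr rfl fun j _ => by ring

@[simp] lemma sliceL_apply {I J K : Type*} [Fintype I] [Fintype J]
    (ψ : I → J → K → ℂ) (u : I → ℂ) (v : J → ℂ) : sliceL ψ u v = bApp ψ u v := rfl

lemma span_range_bApp {I J K : Type*} [Fintype I] [Fintype J]
    (ψ : I → J → K → ℂ) (u : I → ℂ) :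
    Submodule.span ℂ (Set.range (bApp ψ u)) = LinearMap.range (sliceL ψ u) := by
  have h : Set.range (bApp ψ u) = ↑(LinearMap.range (sliceL ψ u)) :=
    (LinearMap.coe_range (sliceL ψ u)).symm
  rw [h, Submodule.span_eq]

lemma bApp_zero_left {I J K : Type*} [Fintype I] [Fintype J]
    (ψ : I → J → K → ℂ) (v : J → ℂ) (k : K) : bApp ψ (0 : I → ℂ) v k = 0 := by
  simp [bApp]

lemma bApp_zero_right {I J K : Type*} [Fintype I] [Fintype J]
    (ψ : I → J → K → ℂ) (u : I → ℂ) (k : K) : bApp ψ u (0 : J → ℂ) k = 0 := by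
  simp [bApp]

lemma cwPow_cons {q n : ℕ} (a b c : Fin (q + 1)) (i j k : Fin n → Fin (q + 1)) :
    cwPow q (n + 1) (Fin.cons a i) (Fin.cons b j) (Fin.cons c k) =
      cwArr q a b c * cwPow q n i j k := by
  simp [cwPow, Fin.prod_univ_succ]

/-- Master decomposition of the slice of a tensor power. -/
lemma bApp_cons {q n : ℕ} (u v : (Fin (n + 1) → Fin (q + 1)) → ℂ)
    (c : Fin (q + 1)) (k : Fin n → Fin (q + 1)) :
    bApp (cwPow q (n + 1)) u v (Fin.cons c k) =
      ∑ a : Fin (q + 1), ∑ b : Fin (q + 1), cwArr q a b c *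
        bApp (cwPow q n) (fun i => u (Fin.cons a i)) (fun j => v (Fin.cons b j)) k := by
  classical
  set e := Fin.consEquiv (fun _ : Fin (n + 1) => Fin (q + 1)) with he
  have h1 : bApp (cwPow q (n + 1)) u v (Fin.cons c k)
      = ∑ p : Fin (q + 1) × (Fin n → Fin (q + 1)),
          ∑ r : Fin (q + 1) × (Fin n → Fin (q + 1)),
          cwPow q (n + 1) (e p) (e r) (Fin.cons c k) * u (e p) * v (e r) := by
    unfold bApp
    rw [← Equiv.sum_comp e
      (fun i => ∑ j, cwPow q (n + 1) i j (Fin.cons c k) * u i * v j)]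
    exact Finset.sum_congr rfl fun p _ => (Equiv.sum_comp e _).symm
  rw [h1]
  simp only [Fintype.sum_prod_type]
  unfold bApp
  refine Finset.sum_congr rfl fun a _ => ?_
  rw [Finset.sum_comm]
  refine Finset.sum_congr rfl fun b _ => ?_
  rw [Finset.mul_sum]
  refine Finset.sum_congr rfl fun i _ => ?_
  rw [Finset.mul_sum]
  refine Finset.sum_congr rfl fun j _ => ?_
  show cwPow q (n + 1) (Fin.cons a i) (Fin.cons b j) (Fin.cons c k) * u (Fin.cons a i) *
      v (Fin.cons b j) = _
  rw [cwPow_cons]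
  ring

lemma sum_cwArr_ne {q : ℕ} {c : Fin (q + 1)} (hc : c ≠ 0)
    (X : Fin (q + 1) → Fin (q + 1) → ℂ) :
    ∑ a, ∑ b, cwArr q a b c * X a b = X 0 c + X c 0 := by
  classical
  have h1 : ∀ a b : Fin (q + 1), cwArr q a b c =
      (if a = 0 ∧ b = c then (1 : ℂ) else 0) + (if a = c ∧ b = 0 then 1 else 0) := by
    intro a b; simp [cwArr, if_neg hc]
  simp only [h1, add_mul, Finset.sum_add_distrib, ite_mul, one_mul, zero_mul]
  congr 1
  · rw [Finset.sum_eq_single (0 : Fin (q + 1))]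
    · rw [Finset.sum_eq_single c]
      · simp
      · intro b _ hb; simp [hb]
      · intro h; exact absurd (Finset.mem_univ _) h
    · intro a _ ha
      apply Finset.sum_eq_zero; intro b _; simp [ha]
    · intro h; exact absurd (Finset.mem_univ _) h
  · rw [Finset.sum_eq_single c]
    · rw [Finset.sum_eq_single (0 : Fin (q + 1))]
      · simp
      · intro b _ hb; simp [hb]
      · intro h; exact absurd (Finset.mem_univ _) h
    · intro a _ ha
      apply Finset.sum_eq_zero; intro b _; simp [ha]
    · intro h; exact absurd (Finset.mem_univ _) h

lemma sum_cwArr_zero {q : ℕ} (X : Fin (q + 1) → Fin (q + 1) → ℂ) :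
    ∑ a, ∑ b, cwArr q a b 0 * X a b = ∑ a, if a = 0 then 0 else X a a := by
  classical
  refine Finset.sum_congr rfl fun a _ => ?_
  rw [Finset.sum_eq_single a]
  · by_cases ha : a = 0 <;> simp [cwArr, ha]
  · intro b _ hb
    have : ¬(a = b ∧ a ≠ 0) := fun h => hb h.1.symm
    simp [cwArr, this]
  · intro h; exact absurd (Finset.mem_univ _) h

lemma bApp_cons_ne {q n : ℕ} (u v : (Fin (n + 1) → Fin (q + 1)) → ℂ)
    {c : Fin (q + 1)} (hc : c ≠ 0) (k : Fin n → Fin (q + 1)) :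
    bApp (cwPow q (n + 1)) u v (Fin.cons c k) =
      bApp (cwPow q n) (fun i => u (Fin.cons 0 i)) (fun j => v (Fin.cons c j)) k +
      bApp (cwPow q n) (fun i => u (Fin.cons c i)) (fun j => v (Fin.cons 0 j)) k := by
  rw [bApp_cons, sum_cwArr_ne hc]

lemma bApp_cons_zero {q n : ℕ} (u v : (Fin (n + 1) → Fin (q + 1)) → ℂ)
    (k : Fin n → Fin (q + 1)) :
    bApp (cwPow q (n + 1)) u v (Fin.cons 0 k) =
      ∑ a, if a = 0 then 0 else
        bApp (cwPow q n) (fun i => u (Fin.cons a i)) (fun j => v (Fin.cons a j)) k := by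
  rw [bApp_cons, sum_cwArr_zero]

/-- The compression map putting a pair of vectors into blocks `b₁, b₂`. -/
noncomputable def qMap (q n : ℕ) (b₁ b₂ : Fin (q + 1)) :
    (((Fin n → Fin (q + 1)) → ℂ) × ((Fin n → Fin (q + 1)) → ℂ)) →ₗ[ℂ]
      ((Fin (n + 1) → Fin (q + 1)) → ℂ) where
  toFun p := fun x =>
    if x 0 = b₁ then p.1 (Fin.tail x) else if x 0 = b₂ then p.2 (Fin.tail x) else 0
  map_add' p r := by
    funext x
    simp only [Prod.fst_add, Prod.snd_add, Pi.add_apply]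
    split_ifs <;> simp
  map_smul' c p := by
    funext x
    simp only [Prod.smul_fst, Prod.smul_snd, Pi.smul_apply, smul_eq_mul, RingHom.id_apply]
    split_ifs <;> simp

/-- Projection onto blocks `c₁, c₂`. -/
noncomputable def pMap (q n : ℕ) (c₁ c₂ : Fin (q + 1)) :
    ((Fin (n + 1) → Fin (q + 1)) → ℂ) →ₗ[ℂ]
      (((Fin n → Fin (q + 1)) → ℂ) × ((Fin n → Fin (q + 1)) → ℂ)) where
  toFun f := (fun k => f (Fin.cons c₁ k), fun k => f (Fin.cons c₂ k))
  map_add' f g := rfl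
  map_smul' c f := rfl

lemma qMap_cons {q n : ℕ} (b₁ b₂ : Fin (q + 1)) (p) (b : Fin (q + 1))
    (j : Fin n → Fin (q + 1)) :
    qMap q n b₁ b₂ p (Fin.cons b j) =
      if b = b₁ then p.1 j else if b = b₂ then p.2 j else 0 := by
  simp [qMap, Fin.tail_cons]

lemma keyA {q n : ℕ} (u : (Fin (n + 1) → Fin (q + 1)) → ℂ) (b₁ b₂ : Fin (q + 1))
    (h1 : b₁ ≠ 0) (h2 : b₂ ≠ 0) (h12 : b₁ ≠ b₂) :
    pMap q n b₁ b₂ ∘ₗ sliceL (cwPow q (n + 1)) u ∘ₗ qMap q n b₁ b₂ =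
      (sliceL (cwPow q n) (fun i => u (Fin.cons 0 i))).prodMap
        (sliceL (cwPow q n) (fun i => u (Fin.cons 0 i))) := by
  apply LinearMap.ext; intro p
  have hv0 : (fun j => qMap q n b₁ b₂ p (Fin.cons 0 j)) = (0 : (Fin n → Fin (q+1)) → ℂ) := by
    funext j; rw [qMap_cons]; simp [Ne.symm h1, Ne.symm h2]
  apply Prod.ext
  · show bApp (cwPow q (n + 1)) u (qMap q n b₁ b₂ p) ∘ Fin.cons b₁ = _
    funext k
    show bApp (cwPow q (n + 1)) u (qMap q n b₁ b₂ p) (Fin.cons b₁ k) = _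
    rw [bApp_cons_ne _ _ h1]
    have hv1 : (fun j => qMap q n b₁ b₂ p (Fin.cons b₁ j)) = p.1 := by
      funext j; rw [qMap_cons]; simp
    rw [hv1, hv0, bApp_zero_right, add_zero]
    rfl
  · show bApp (cwPow q (n + 1)) u (qMap q n b₁ b₂ p) ∘ Fin.cons b₂ = _
    funext k
    show bApp (cwPow q (n + 1)) u (qMap q n b₁ b₂ p) (Fin.cons b₂ k) = _
    rw [bApp_cons_ne _ _ h2]
    have hv2 : (fun j => qMap q n b₁ b₂ p (Fin.cons b₂ j)) = p.2 := by
      funext j; rw [qMap_cons]; simp [Ne.symm h12]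
    rw [hv2, hv0, bApp_zero_right, add_zero]
    rfl

lemma keyB {q n : ℕ} (u : (Fin (n + 1) → Fin (q + 1)) → ℂ) (a₀ : Fin (q + 1))
    (ha : a₀ ≠ 0) (hu0 : (fun i => u (Fin.cons 0 i)) = (0 : (Fin n → Fin (q+1)) → ℂ)) :
    pMap q n a₀ 0 ∘ₗ sliceL (cwPow q (n + 1)) u ∘ₗ qMap q n 0 a₀ =
      (sliceL (cwPow q n) (fun i => u (Fin.cons a₀ i))).prodMap
        (sliceL (cwPow q n) (fun i => u (Fin.cons a₀ i))) := by
  apply LinearMap.ext; intro p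
  apply Prod.ext
  · show bApp (cwPow q (n + 1)) u (qMap q n 0 a₀ p) ∘ Fin.cons a₀ = _
    funext k
    show bApp (cwPow q (n + 1)) u (qMap q n 0 a₀ p) (Fin.cons a₀ k) = _
    rw [bApp_cons_ne _ _ ha]
    have hva : (fun j => qMap q n 0 a₀ p (Fin.cons a₀ j)) = p.2 := by
      funext j; rw [qMap_cons]; simp [ha]
    have hv0 : (fun j => qMap q n 0 a₀ p (Fin.cons 0 j)) = p.1 := by
      funext j; rw [qMap_cons]; simp
    rw [hva, hv0, hu0, bApp_zero_left, zero_add]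
    rfl
  · show bApp (cwPow q (n + 1)) u (qMap q n 0 a₀ p) ∘ Fin.cons 0 = _
    funext k
    show bApp (cwPow q (n + 1)) u (qMap q n 0 a₀ p) (Fin.cons 0 k) = _
    rw [bApp_cons_zero]
    rw [Finset.sum_eq_single a₀]
    · have hva : (fun j => qMap q n 0 a₀ p (Fin.cons a₀ j)) = p.2 := by
        funext j; rw [qMap_cons]; simp [ha]
      rw [if_neg ha, hva]
      rfl
    · intro a _ haa
      by_cases ha0 : a = 0
      · simp [ha0]
      · rw [if_neg ha0]
        have : (fun j => qMap q n 0 a₀ p (Fin.cons a j)) = (0 : (Fin n → Fin (q+1)) → ℂ) := by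
          funext j; rw [qMap_cons]; simp [ha0, haa]
        rw [this, bApp_zero_right]
    · intro h; exact absurd (Finset.mem_univ _) h

lemma finrank_range_comp_le {V V' W W' : Type*}
    [AddCommGroup V] [Module ℂ V] [AddCommGroup V'] [Module ℂ V']
    [AddCommGroup W] [Module ℂ W] [AddCommGroup W'] [Module ℂ W']
    [FiniteDimensional ℂ W] [FiniteDimensional ℂ W']
    (L : V →ₗ[ℂ] W) (Q : V' →ₗ[ℂ] V) (P : W →ₗ[ℂ] W') :
    Module.finrank ℂ (LinearMap.range (P ∘ₗ L ∘ₗ Q)) ≤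
      Module.finrank ℂ (LinearMap.range L) := by
  have h : LinearMap.range (P ∘ₗ L ∘ₗ Q) ≤ (LinearMap.range L).map P := by
    rintro _ ⟨x, rfl⟩
    exact ⟨L (Q x), ⟨Q x, rfl⟩, rfl⟩
  exact le_trans (Submodule.finrank_mono h) (Submodule.finrank_map_le P _)

lemma le_finrank_range_prodMap {V W : Type*}
    [AddCommGroup V] [Module ℂ V] [AddCommGroup W] [Module ℂ W]
    [FiniteDimensional ℂ W] (f : V →ₗ[ℂ] W) :
    Module.finrank ℂ (LinearMap.range f) + Module.finrank ℂ (LinearMap.range f) ≤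
      Module.finrank ℂ (LinearMap.range (f.prodMap f)) := by
  set p := LinearMap.range f
  set p₁ := p.map (LinearMap.inl ℂ W W) with hp₁
  set p₂ := p.map (LinearMap.inr ℂ W W) with hp₂
  have h1 : p₁ ≤ LinearMap.range (f.prodMap f) := by
    rintro _ ⟨w, ⟨v, rfl⟩, rfl⟩
    exact ⟨(v, 0), by simp⟩
  have h2 : p₂ ≤ LinearMap.range (f.prodMap f) := by
    rintro _ ⟨w, ⟨v, rfl⟩, rfl⟩
    exact ⟨(0, v), by simp⟩
  have hdisj : p₁ ⊓ p₂ = ⊥ := by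
    rw [Submodule.eq_bot_iff]
    rintro ⟨x1, x2⟩ ⟨hx1, hx2⟩
    obtain ⟨w1, _, he1⟩ := hx1
    obtain ⟨w2, _, he2⟩ := hx2
    have e1 : x2 = 0 := by
      have := congrArg Prod.snd he1; simpa using this.symm
    have e2 : x1 = 0 := by
      have := congrArg Prod.fst he2; simpa using this.symm
    simp [e1, e2, Prod.ext_iff]
  have hr1 : Module.finrank ℂ p₁ = Module.finrank ℂ p := by
    exact (LinearEquiv.finrank_eq
      (Submodule.equivMapOfInjective _ LinearMap.inl_injective p)).symm
  have hr2 : Module.finrank ℂ p₂ = Module.finrank ℂ p := by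
    exact (LinearEquiv.finrank_eq
      (Submodule.equivMapOfInjective _ LinearMap.inr_injective p)).symm
  have hsum := Submodule.finrank_sup_add_finrank_inf_eq p₁ p₂
  rw [hdisj] at hsum
  simp only [finrank_bot, add_zero] at hsum
  calc Module.finrank ℂ p + Module.finrank ℂ p
      = Module.finrank ℂ ↥(p₁ ⊔ p₂) := by rw [hsum, hr1, hr2]
    _ ≤ Module.finrank ℂ (LinearMap.range (f.prodMap f)) :=
        Submodule.finrank_mono (sup_le h1 h2)

/-- Lower bound: every nonzero slice of `cwPow q n` has rank at least `2 ^ n`. -/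
lemma cw_lower (q : ℕ) (hq : 2 ≤ q) :
    ∀ n (u : (Fin n → Fin (q + 1)) → ℂ), u ≠ 0 →
      2 ^ n ≤ Module.finrank ℂ (LinearMap.range (sliceL (cwPow q n) u)) := by
  intro n
  induction n with
  | zero =>
    intro u hu
    obtain ⟨i₀, hi₀⟩ := Function.ne_iff.mp hu
    have huniq : ∀ x : Fin 0 → Fin (q + 1), x = i₀ := fun x => funext fun t => t.elim0
    have hval : bApp (cwPow q 0) u u i₀ = u i₀ * u i₀ := by
      unfold bApp
      rw [Finset.sum_eq_single i₀ (fun b _ hb => absurd (huniq b) hb)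
        (fun h => absurd (Finset.mem_univ _) h)]
      rw [Finset.sum_eq_single i₀ (fun b _ hb => absurd (huniq b) hb)
        (fun h => absurd (Finset.mem_univ _) h)]
      have : cwPow q 0 i₀ i₀ i₀ = 1 := by simp [cwPow]
      rw [this, one_mul]
    have hmem : bApp (cwPow q 0) u u ∈ LinearMap.range (sliceL (cwPow q 0) u) := ⟨u, rfl⟩
    rw [pow_zero, Nat.one_le_iff_ne_zero]
    intro h0
    have hbot : LinearMap.range (sliceL (cwPow q 0) u) = ⊥ :=
      Submodule.finrank_eq_zero.mp h0
    rw [hbot, Submodule.mem_bot] at hmem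
    have := congrFun hmem i₀
    rw [hval] at this
    simp only [Pi.zero_apply] at this
    exact hi₀ (by
      have := mul_self_eq_zero.mp this
      exact this)
  | succ n ih =>
    intro u hu
    have h2n : 2 ^ (n + 1) = 2 ^ n + 2 ^ n := by rw [pow_succ, mul_two]
    by_cases h0 : (fun i => u (Fin.cons 0 i)) = (0 : (Fin n → Fin (q+1)) → ℂ)
    · -- the 0-block vanishes; find a nonzero block a₀ ≠ 0
      obtain ⟨x, hx⟩ := Function.ne_iff.mp hu
      have hxc : u (Fin.cons (x 0) (Fin.tail x)) ≠ 0 := by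
        rw [Fin.cons_self_tail]; exact hx
      have ha : x 0 ≠ 0 := by
        intro h
        rw [h] at hxc
        exact hxc (congrFun h0 (Fin.tail x))
      have huA : (fun i => u (Fin.cons (x 0) i)) ≠ (0 : (Fin n → Fin (q+1)) → ℂ) :=
        Function.ne_iff.mpr ⟨Fin.tail x, hxc⟩
      have key := keyB u (x 0) ha h0
      set A := sliceL (cwPow q n) (fun i => u (Fin.cons (x 0) i)) with hA
      calc 2 ^ (n + 1) = 2 ^ n + 2 ^ n := h2n
        _ ≤ Module.finrank ℂ (LinearMap.range A) + Module.finrank ℂ (LinearMap.range A) :=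
            add_le_add (ih _ huA) (ih _ huA)
        _ ≤ Module.finrank ℂ (LinearMap.range (A.prodMap A)) := le_finrank_range_prodMap A
        _ = Module.finrank ℂ (LinearMap.range
              (pMap q n (x 0) 0 ∘ₗ sliceL (cwPow q (n + 1)) u ∘ₗ qMap q n 0 (x 0))) := by
            rw [key]
        _ ≤ Module.finrank ℂ (LinearMap.range (sliceL (cwPow q (n + 1)) u)) :=
            finrank_range_comp_le _ _ _
    · -- the 0-block is nonzero; use blocks 1 and 2
      have hb1 : ((⟨1, by omega⟩ : Fin (q + 1))) ≠ 0 := by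
        simp [Fin.ext_iff]
      have hb2 : ((⟨2, by omega⟩ : Fin (q + 1))) ≠ 0 := by
        simp [Fin.ext_iff]
      have hb12 : ((⟨1, by omega⟩ : Fin (q + 1))) ≠ (⟨2, by omega⟩ : Fin (q + 1)) := by
        simp [Fin.ext_iff]
      have key := keyA u ⟨1, by omega⟩ ⟨2, by omega⟩ hb1 hb2 hb12
      set A := sliceL (cwPow q n) (fun i => u (Fin.cons 0 i)) with hA
      calc 2 ^ (n + 1) = 2 ^ n + 2 ^ n := h2n
        _ ≤ Module.finrank ℂ (LinearMap.range A) + Module.finrank ℂ (LinearMap.range A) :=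
            add_le_add (ih _ h0) (ih _ h0)
        _ ≤ Module.finrank ℂ (LinearMap.range (A.prodMap A)) := le_finrank_range_prodMap A
        _ = Module.finrank ℂ (LinearMap.range
              (pMap q n ⟨1, by omega⟩ ⟨2, by omega⟩ ∘ₗ sliceL (cwPow q (n + 1)) u ∘ₗ
                qMap q n ⟨1, by omega⟩ ⟨2, by omega⟩)) := by rw [key]
        _ ≤ Module.finrank ℂ (LinearMap.range (sliceL (cwPow q (n + 1)) u)) :=
            finrank_range_comp_le _ _ _

/-- for `q ≥ 2` and `n ≥ 1`, `m(φ_cw^{⊗n}) = 2ⁿ`. -/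
theorem stmt12 (q n : ℕ) (hq : 2 ≤ q) (hn : 1 ≤ n) :
    mval (cwPow q n) = 2 ^ n := by
  classical
  set b1 : Fin (q + 1) := ⟨1, by omega⟩ with hb1def
  have hb1 : b1 ≠ 0 := by simp [hb1def, Fin.ext_iff]
  set ι : Fin n → Fin (q + 1) := fun _ => b1 with hι
  set ustar : (Fin n → Fin (q + 1)) → ℂ := Pi.single ι 1 with hustar
  have hustar_ne : ustar ≠ 0 := by
    intro h
    have := congrFun h ι
    rw [hustar] at this
    simp at this
  -- the embedding of 0-1 tuples
  set Emb : (Fin n → Fin 2) → (Fin n → Fin (q + 1)) :=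
    fun m t => if m t = 0 then 0 else b1 with hEmbdef
  have hEmb : Function.Injective Emb := by
    intro m m' h
    funext t
    have ht := congrFun h t
    simp only [hEmbdef] at ht
    by_cases h1 : m t = 0 <;> by_cases h2 : m' t = 0
    · rw [h1, h2]
    · rw [if_pos h1, if_neg h2] at ht; exact absurd ht.symm hb1
    · rw [if_neg h1, if_pos h2] at ht; exact absurd ht hb1
    · omega
  -- extension-by-zero linear map
  set ε : ((Fin n → Fin 2) → ℂ) →ₗ[ℂ] ((Fin n → Fin (q + 1)) → ℂ) :=
    { toFun := fun f k => if h : ∃ m, Emb m = k then f h.choose else 0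
      map_add' := by
        intro f g; funext k
        by_cases h : ∃ m, Emb m = k <;> simp [h]
      map_smul' := by
        intro c f; funext k
        by_cases h : ∃ m, Emb m = k <;> simp [h] } with hεdef
  have hεval : ∀ (f : (Fin n → Fin 2) → ℂ) (m : Fin n → Fin 2), ε f (Emb m) = f m := by
    intro f m
    have h : ∃ m', Emb m' = Emb m := ⟨m, rfl⟩
    show (if h' : ∃ m', Emb m' = Emb m then f h'.choose else 0) = f m
    rw [dif_pos h]
    congr 1
    exact hEmb h.choose_spec
  have hεinj : Function.Injective ε := by
    intro f g hfg
    funext m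
    rw [← hεval f m, ← hεval g m, hfg]
  -- the slice of ustar vanishes off the image of Emb
  have hvan : ∀ (v : (Fin n → Fin (q + 1)) → ℂ) (k : Fin n → Fin (q + 1)),
      (¬∃ m, Emb m = k) → bApp (cwPow q n) ustar v k = 0 := by
    intro v k hk
    have hbad : ∃ t, k t ≠ 0 ∧ k t ≠ b1 := by
      by_contra hall
      push_neg at hall
      apply hk
      refine ⟨fun t => if k t = 0 then 0 else 1, funext fun t => ?_⟩
      simp only [hEmbdef]
      by_cases h : k t = 0
      · simp [h]
      · have h1 : (if k t = 0 then (0 : Fin 2) else 1) = 1 := if_neg h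
        simp only [h1]
        rw [if_neg (by decide : ¬(1 : Fin 2) = 0)]
        exact (hall t h).symm
    obtain ⟨t, ht0, htb⟩ := hbad
    unfold bApp
    apply Finset.sum_eq_zero
    intro i _
    by_cases hi : i = ι
    · subst hi
      apply Finset.sum_eq_zero
      intro j _
      have : cwPow q n ι j k = 0 := by
        apply Finset.prod_eq_zero (Finset.mem_univ t)
        have : ι t = b1 := rfl
        rw [this]
        simp only [cwArr, if_neg ht0]
        have c1 : ¬(b1 = 0 ∧ j t = k t) := fun h => hb1 h.1
        have c2 : ¬(b1 = k t ∧ j t = 0) := fun h => htb h.1.symm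
        rw [if_neg c1, if_neg c2, add_zero]
      rw [this]
      ring
    · apply Finset.sum_eq_zero
      intro j _
      rw [hustar, Pi.single_eq_of_ne hi]
      ring
  -- upper bound for the rank of the slice of ustar
  have hub : Module.finrank ℂ (Submodule.span ℂ (Set.range (bApp (cwPow q n) ustar)))
      ≤ 2 ^ n := by
    have hle : Submodule.span ℂ (Set.range (bApp (cwPow q n) ustar)) ≤ LinearMap.range ε := by
      rw [Submodule.span_le]
      rintro _ ⟨v, rfl⟩
      refine ⟨fun m => bApp (cwPow q n) ustar v (Emb m), ?_⟩
      funext k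
      show (if h : ∃ m, Emb m = k then bApp (cwPow q n) ustar v (Emb h.choose) else 0) = _
      by_cases h : ∃ m, Emb m = k
      · rw [dif_pos h, h.choose_spec]
      · rw [dif_neg h, (hvan v k h).symm]
    calc Module.finrank ℂ (Submodule.span ℂ (Set.range (bApp (cwPow q n) ustar)))
        ≤ Module.finrank ℂ (LinearMap.range ε) := Submodule.finrank_mono hle
      _ = Module.finrank ℂ ((Fin n → Fin 2) → ℂ) := LinearMap.finrank_range_of_inj hεinj
      _ = 2 ^ n := by
          rw [Module.finrank_pi]
          simp [Fintype.card_fun]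
  -- assemble
  have hlow : ∀ d ∈ {d | ∃ u : (Fin n → Fin (q+1)) → ℂ, u ≠ 0 ∧
      d = Module.finrank ℂ (Submodule.span ℂ (Set.range (bApp (cwPow q n) u)))},
      2 ^ n ≤ d := by
    rintro d ⟨u, hu, rfl⟩
    rw [span_range_bApp]
    exact cw_lower q hq n u hu
  have hmem : Module.finrank ℂ (Submodule.span ℂ (Set.range (bApp (cwPow q n) ustar)))
      ∈ {d | ∃ u : (Fin n → Fin (q+1)) → ℂ, u ≠ 0 ∧
      d = Module.finrank ℂ (Submodule.span ℂ (Set.range (bApp (cwPow q n) u)))} :=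
    ⟨ustar, hustar_ne, rfl⟩
  unfold mval
  have hSinf_mem := Nat.sInf_mem ⟨_, hmem⟩
  have h1 := hlow _ hSinf_mem
  have h2 := le_trans (Nat.sInf_le hmem) hub
  omega
end
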